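/- For the Gaussian mechanism on ℝ: let f have ℓ₂-sensitivity Δ (i.e., |f(D₁) − f(D₂)| ≤ Δ for all adjacent D₁, D₂), let M(D) = f(D) + Z with Z ~ N(0, σ²Δ²). If σ ≥ √(2 ln(1.25/δ))/ε with 0 < ε < 1, then for all adjacent D₁, D₂ and all measurable S ⊆ ℝ: P(M(D₁) ∈ S) ≤ e^ε P(M(D₂) ∈ S) + δ. -/

import Mathlib

/-!
At `x` the privacy loss of `N(μ₁, v)` against `N(μ₂, v)` is `((x - μ₂)² - (x - μ₁)²) / (2v)`,
an affine function of `x`. When `|μ₁ - μ₂| ≤ Δ` it exceeds `ε` only on a half-line at distance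
at least `b = vε/Δ - Δ/2` beyond `μ₁`, so `N(μ₁, v)(S) ≤ e^ε N(μ₂, v)(S) + P(Z > b)` with
`Z ~ N(0, v)`. For `v = (σΔ)²` one has `b = rσΔ` with `r = σε - 1/(2σ)`, and `(σε)² - r² ≤ ε < 1`.
With `L = log (1.25/δ) ≤ (σε)²/2` this gives `L - r²/2 < 1/2`, so for `r ≥ 0` the tail bound
`e^{-r²/2}/2 ≤ e^{1/2} e^{-L}/2` is at most `δ = 1.25 e^{-L}`. If `r < 0` then `L < 1/4`, hence
`δ > 15/16`, and the crude bound `1/2 + |r|/√(2π)` on the tail suffices.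
-/

open MeasureTheory Real ProbabilityTheory Set
open scoped NNReal ENNReal

namespace ProbabilityTheory

variable {μ₁ μ₂ : ℝ} {v : ℝ≥0}

lemma gaussianPDFReal_le_exp_mul_of_sq_sub_sq_le (hv : v ≠ 0) {ε x : ℝ}
    (h : (x - μ₂) ^ 2 - (x - μ₁) ^ 2 ≤ 2 * v * ε) :
    gaussianPDFReal μ₁ v x ≤ exp ε * gaussianPDFReal μ₂ v x := by
  have hloss : ((x - μ₂) ^ 2 - (x - μ₁) ^ 2) / (2 * v) ≤ ε :=
    (div_le_iff₀ (by positivity)).2 (by linarith)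
  rw [gaussianPDFReal, gaussianPDFReal, mul_left_comm, ← exp_add]
  gcongr
  rw [sub_div] at hloss
  rw [neg_div, neg_div]
  linarith

lemma gaussianReal_le_exp_mul_of_sq_sub_sq_le (hv : v ≠ 0) {ε : ℝ} {S : Set ℝ}
    (h : ∀ x ∈ S, (x - μ₂) ^ 2 - (x - μ₁) ^ 2 ≤ 2 * v * ε) :
    gaussianReal μ₁ v S ≤ ENNReal.ofReal (exp ε) * gaussianReal μ₂ v S := by
  rw [gaussianReal_apply _ hv, gaussianReal_apply _ hv,
    ← lintegral_const_mul _ (measurable_gaussianPDF _ _)]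
  refine setLIntegral_mono (by fun_prop) fun x hx ↦ ?_
  rw [gaussianPDF, gaussianPDF, ← ENNReal.ofReal_mul (exp_nonneg _)]
  exact ENNReal.ofReal_le_ofReal (gaussianPDFReal_le_exp_mul_of_sq_sub_sq_le hv (h x hx))

lemma gaussianReal_le_ofReal_mul_volume (hv : v ≠ 0) (μ : ℝ) (S : Set ℝ) :
    gaussianReal μ v S ≤ ENNReal.ofReal (√(2 * π * v))⁻¹ * volume S := by
  rw [gaussianReal_apply _ hv, ← setLIntegral_const]
  refine lintegral_mono fun x ↦ ENNReal.ofReal_le_ofReal ?_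
  refine mul_le_of_le_one_right (by positivity) (exp_le_one_iff.2 ?_)
  exact div_nonpos_of_nonpos_of_nonneg (neg_nonpos.2 (sq_nonneg _)) (by positivity)

lemma gaussianReal_const_add_Ioi (y μ a : ℝ) :
    gaussianReal (y + μ) v (Ioi (y + a)) = gaussianReal μ v (Ioi a) := by
  rw [add_comm y μ, ← gaussianReal_map_const_add,
    Measure.map_apply (measurable_const_add y) measurableSet_Ioi, preimage_const_add_Ioi,
    add_sub_cancel_left]

lemma gaussianReal_neg_apply (μ : ℝ) {S : Set ℝ} (hS : MeasurableSet S) :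
    gaussianReal (-μ) v S = gaussianReal μ v (-S) := by
  rw [← gaussianReal_map_neg, Measure.map_apply measurable_neg hS]
  rfl

lemma gaussianReal_Ioi_zero (hv : v ≠ 0) : gaussianReal 0 v (Ioi 0) = 2⁻¹ := by
  have := nullSingletonClass_gaussianReal (μ := 0) hv
  have hsymm : gaussianReal 0 v (Iio 0) = gaussianReal 0 v (Ioi 0) := by
    simpa using (gaussianReal_neg_apply (v := v) 0 (measurableSet_Ioi (a := 0))).symm
  have hsum : gaussianReal 0 v (Iio 0) + gaussianReal 0 v (Ioi 0) = 1 := by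
    rw [← measure_union ((Iio_disjoint_Ici le_rfl).mono_right Ioi_subset_Ici_self)
      measurableSet_Ioi, Iio_union_Ioi, measure_compl (measurableSet_singleton 0)
      (measure_ne_top _ _), measure_singleton, measure_univ, tsub_zero]
  rw [hsymm, ← mul_two] at hsum
  exact ENNReal.eq_inv_of_mul_eq_one_left hsum

lemma gaussianReal_Ioi_le_exp_div_two (hv : v ≠ 0) {t : ℝ} (ht : 0 ≤ t) :
    gaussianReal 0 v (Ioi t) ≤ ENNReal.ofReal (exp (-t ^ 2 / (2 * v)) / 2) := by
  calc gaussianReal 0 v (Ioi t) = gaussianReal (-t) v (Ioi 0) := by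
        simpa using gaussianReal_const_add_Ioi (v := v) t (-t) 0
    _ ≤ ENNReal.ofReal (exp (-t ^ 2 / (2 * v))) * gaussianReal 0 v (Ioi 0) := by
        refine gaussianReal_le_exp_mul_of_sq_sub_sq_le hv fun x (hx : 0 < x) ↦ ?_
        have : 2 * v * (-t ^ 2 / (2 * v)) = -t ^ 2 := by field_simp
        rw [this]
        nlinarith [mul_nonneg hx.le ht]
    _ = ENNReal.ofReal (exp (-t ^ 2 / (2 * v)) / 2) := by
        rw [gaussianReal_Ioi_zero hv, ENNReal.ofReal_div_of_pos two_pos, ENNReal.ofReal_ofNat]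
        exact (div_eq_mul_inv _ _).symm

lemma gaussianReal_Ioi_le_half_sub (hv : v ≠ 0) {t : ℝ} (ht : t ≤ 0) :
    gaussianReal 0 v (Ioi t) ≤ ENNReal.ofReal (1 / 2 - t / √(2 * π * v)) := by
  calc gaussianReal 0 v (Ioi t) ≤ gaussianReal 0 v (Ioc t 0) + gaussianReal 0 v (Ioi 0) := by
        rw [← Ioc_union_Ioi_eq_Ioi ht]; exact measure_union_le _ _
    _ ≤ ENNReal.ofReal (√(2 * π * v))⁻¹ * volume (Ioc t 0) + 2⁻¹ :=
        add_le_add (gaussianReal_le_ofReal_mul_volume hv 0 _) (gaussianReal_Ioi_zero hv).le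
    _ = ENNReal.ofReal (1 / 2 - t / √(2 * π * v)) := by
        have half : (2⁻¹ : ℝ≥0∞) = ENNReal.ofReal (1 / 2) := by
          rw [one_div, ENNReal.ofReal_inv_of_pos two_pos, ENNReal.ofReal_ofNat]
        rw [Real.volume_Ioc, ← ENNReal.ofReal_mul (by positivity), half,
          ← ENNReal.ofReal_add (mul_nonneg (by positivity) (by linarith)) (by norm_num)]
        congr 1
        ring

theorem gaussianReal_le_exp_mul_add_gaussianReal_Ioi {Δ ε : ℝ} (hΔ : 0 < Δ) (hε : 0 ≤ ε)
    (hμ : |μ₁ - μ₂| ≤ Δ) {S : Set ℝ} (hS : MeasurableSet S) :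
    gaussianReal μ₁ v S ≤
      ENNReal.ofReal (exp ε) * gaussianReal μ₂ v S + gaussianReal 0 v (Ioi (v * ε / Δ - Δ / 2)) := by
  rcases eq_or_ne v 0 with rfl | hv
  · have h0 : (0 : ℝ) ∈ Ioi ((0 : ℝ≥0) * ε / Δ - Δ / 2) := by simp [hΔ]
    rw [gaussianReal_zero_var 0, Measure.dirac_apply_of_mem h0]
    exact prob_le_one.trans le_add_self
  wlog h : μ₂ ≤ μ₁ generalizing μ₁ μ₂ S
  · have := this (μ₁ := -μ₁) (μ₂ := -μ₂) (by rwa [← abs_neg, neg_sub_neg, neg_sub]) hS.neg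
      (by linarith)
    rwa [gaussianReal_neg_apply _ hS.neg, gaussianReal_neg_apply _ hS.neg, neg_neg] at this
  set b := v * ε / Δ - Δ / 2 with hb
  have hq : 0 ≤ v * ε / Δ := by positivity
  have hgood : ∀ x ∈ S ∩ Iic (μ₁ + b), (x - μ₂) ^ 2 - (x - μ₁) ^ 2 ≤ 2 * v * ε := by
    rintro x ⟨-, hx : x ≤ μ₁ + b⟩
    have hc : μ₁ - μ₂ ≤ Δ := (abs_le.1 hμ).2
    have hvε : (v : ℝ) * ε = v * ε / Δ * Δ := by field_simp
    -- with `c = μ₁ - μ₂ ∈ [0, Δ]` the left side is `c (2 (x - μ₁) + c) ≤ c (c - Δ) + 2c vε/Δ`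
    nlinarith [mul_nonneg (sub_nonneg.2 h) (sub_nonneg.2 hx), mul_nonneg (sub_nonneg.2 h)
      (sub_nonneg.2 hc), mul_nonneg hq (sub_nonneg.2 hc)]
  calc gaussianReal μ₁ v S
      ≤ gaussianReal μ₁ v (S ∩ Iic (μ₁ + b)) + gaussianReal μ₁ v (Ioi (μ₁ + b)) := by
        refine (measure_mono fun x hx ↦ ?_).trans (measure_union_le _ _)
        exact (le_or_gt x (μ₁ + b)).imp (⟨hx, ·⟩) id
    _ ≤ ENNReal.ofReal (exp ε) * gaussianReal μ₂ v (S ∩ Iic (μ₁ + b)) +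
          gaussianReal 0 v (Ioi b) := by
        gcongr ?_ + ?_
        · exact gaussianReal_le_exp_mul_of_sq_sub_sq_le hv hgood
        · simpa using (gaussianReal_const_add_Ioi (v := v) μ₁ 0 b).le
    _ ≤ ENNReal.ofReal (exp ε) * gaussianReal μ₂ v S + gaussianReal 0 v (Ioi b) := by
        gcongr
        exact inter_subset_left

end ProbabilityTheory

lemma exp_neg_sq_div_two_div_two_le {ε σ L δ : ℝ} (hε1 : ε < 1) (hσ : 0 < σ)
    (hL : 2 * L ≤ (σ * ε) ^ 2) (hδ : δ = 5 / 4 * exp (-L)) :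
    exp (-(σ * ε - 1 / (2 * σ)) ^ 2 / 2) / 2 ≤ δ := by
  have hgap : (σ * ε) ^ 2 - (σ * ε - 1 / (2 * σ)) ^ 2 ≤ ε := by
    have : (σ * ε) ^ 2 - (σ * ε - 1 / (2 * σ)) ^ 2 = ε - (1 / (2 * σ)) ^ 2 := by
      field_simp; ring
    linarith [sq_nonneg (1 / (2 * σ))]
  have hexp_half : exp (1 / 2) ≤ 5 / 2 := by
    have : exp (1 / 2) * exp (1 / 2) = exp 1 := by rw [← exp_add]; norm_num
    nlinarith [exp_one_lt_three, exp_pos (1 / 2)]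
  calc exp (-(σ * ε - 1 / (2 * σ)) ^ 2 / 2) / 2
      = exp (L - (σ * ε - 1 / (2 * σ)) ^ 2 / 2) * exp (-L) / 2 := by
        rw [← exp_add]; ring_nf
    _ ≤ exp (1 / 2) * exp (-L) / 2 := by gcongr; linarith
    _ ≤ δ := by rw [hδ]; nlinarith [exp_pos (-L)]

lemma half_sub_div_sqrt_two_pi_le {ε σ L δ : ℝ} (hε : 0 < ε) (hε1 : ε < 1) (hσ : 0 < σ)
    (hL₀ : 1 / 5 ≤ L) (hL : 2 * L ≤ (σ * ε) ^ 2) (hδ : δ = 5 / 4 * exp (-L))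
    (hr : σ * ε - 1 / (2 * σ) < 0) :
    1 / 2 - (σ * ε - 1 / (2 * σ)) / √(2 * π) ≤ δ := by
  set a := 1 / (2 * σ) with ha_def
  have ha : a * σ = 1 / 2 := by rw [ha_def]; field_simp
  have hσε : σ * ε ≤ σ := mul_le_of_le_one_right hσ.le hε1.le
  have hL_lt : L < 1 / 4 := by nlinarith [mul_pos hσ hε]
  have hδ_ge : 15 / 16 ≤ δ := by rw [hδ]; nlinarith [add_one_le_exp (-L)]
  have hσ_ge : 3 / 5 ≤ σ := by nlinarith [mul_pos hσ hε]
  have ha_le : a ≤ 5 / 6 := by nlinarith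
  have hsqrt : 2 ≤ √(2 * π) := le_sqrt_of_sq_le (by nlinarith [pi_gt_three])
  have hfrac : -(σ * ε - a) / √(2 * π) ≤ a / 2 :=
    div_le_div₀ (by positivity) (by nlinarith [mul_pos hσ hε]) two_pos hsqrt
  rw [sub_eq_add_neg, ← neg_div]
  linarith

lemma gaussianReal_Ioi_le_of_sqrt_two_log_div_le {ε δ σ Δ : ℝ} (hε : 0 < ε) (hε1 : ε < 1)
    (hδ : 0 < δ) (hδ1 : δ < 1) (hΔ : 0 < Δ) (hσ : √(2 * log (1.25 / δ)) / ε ≤ σ) :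
    gaussianReal 0 ((σ * Δ) ^ 2).toNNReal (Ioi (((σ * Δ) ^ 2).toNNReal * ε / Δ - Δ / 2))
      ≤ ENNReal.ofReal δ := by
  set L := log (1.25 / δ) with hL_def
  have hδL : δ = 5 / 4 * exp (-L) := by
    rw [hL_def, exp_neg, exp_log (by positivity)]; field_simp; norm_num
  have hL₀ : 1 / 5 ≤ L := by
    have : 1 - (1.25 / δ)⁻¹ ≤ L := one_sub_inv_le_log_of_pos (by positivity)
    rw [inv_div] at this
    norm_num at this
    linarith
  obtain ⟨hσε, hL⟩ := sqrt_le_iff.1 ((div_le_iff₀ hε).1 hσ)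
  have hσε_pos : 0 < σ * ε := hσε.lt_of_ne fun h ↦ by rw [← h] at hL; linarith
  have hσ0 : 0 < σ := (pos_iff_pos_of_mul_pos hσε_pos).2 hε
  have hv : (((σ * Δ) ^ 2).toNNReal : ℝ) = (σ * Δ) ^ 2 := Real.coe_toNNReal _ (sq_nonneg _)
  have hv0 : ((σ * Δ) ^ 2).toNNReal ≠ 0 := by
    rw [Ne, Real.toNNReal_eq_zero, not_le]; positivity
  set r := σ * ε - 1 / (2 * σ) with hr_def
  have hthr : (σ * Δ) ^ 2 * ε / Δ - Δ / 2 = r * (σ * Δ) := by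
    rw [hr_def]; field_simp
  rw [hv, hthr]
  rcases le_or_gt 0 r with hr | hr
  · refine (gaussianReal_Ioi_le_exp_div_two hv0 (by positivity)).trans
      (ENNReal.ofReal_le_ofReal ?_)
    have hexp : -(r * (σ * Δ)) ^ 2 / (2 * (σ * Δ) ^ 2) = -r ^ 2 / 2 := by
      field_simp
    rw [hv, hexp]
    exact exp_neg_sq_div_two_div_two_le hε1 hσ0 hL hδL
  · refine (gaussianReal_Ioi_le_half_sub hv0 (by nlinarith [mul_pos hσ0 hΔ])).trans
      (ENNReal.ofReal_le_ofReal ?_)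
    have hfrac : r * (σ * Δ) / √(2 * π * (σ * Δ) ^ 2) = r / √(2 * π) := by
      rw [sqrt_mul (by positivity), sqrt_sq (by positivity)]
      field_simp
    rw [hv, hfrac]
    exact half_sub_div_sqrt_two_pi_le hε hε1 hσ0 hL₀ hL hδL hr

/-- Privacy of the Gaussian mechanism on ℝ: if `f` has sensitivity `Δ` over an adjacency
relation and `M(D) = f(D) + Z` with `Z ~ N(0, σ²Δ²)` where
`σ ≥ √(2 ln(1.25/δ))/ε` and `0 < ε < 1`, then `M` is `(ε, δ)`-differentially private,
i.e. `P(M(D₁) ∈ S) ≤ e^ε P(M(D₂) ∈ S) + δ` for all adjacent `D₁, D₂` and measurable `S`.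
Here the law of `M(D)` is the Gaussian measure `N(f(D), (σΔ)²)`. -/
theorem gaussian_mechanism_dp
    {Dataset : Type*} (Adj : Dataset → Dataset → Prop)
    (f : Dataset → ℝ) (Δ : ℝ) (hΔ : 0 < Δ)
    (hsens : ∀ D₁ D₂, Adj D₁ D₂ → |f D₁ - f D₂| ≤ Δ)
    (ε δ σ : ℝ) (hε : 0 < ε) (hε1 : ε < 1) (hδ : 0 < δ) (hδ1 : δ < 1)
    (hσ : σ ≥ Real.sqrt (2 * Real.log (1.25 / δ)) / ε) :
    ∀ D₁ D₂, Adj D₁ D₂ → ∀ S : Set ℝ, MeasurableSet S →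
      gaussianReal (f D₁) ((σ * Δ) ^ 2).toNNReal S
        ≤ ENNReal.ofReal (Real.exp ε) * gaussianReal (f D₂) ((σ * Δ) ^ 2).toNNReal S
          + ENNReal.ofReal δ := by
  intro D₁ D₂ hadj S hS
  refine (gaussianReal_le_exp_mul_add_gaussianReal_Ioi hΔ hε.le (hsens D₁ D₂ hadj) hS).trans ?_
  gcongr
  exact gaussianReal_Ioi_le_of_sqrt_two_log_div_le hε hε1 hδ hδ1 hΔ hσ
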